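/- The system of Lawrence–Krammer equations (Table 1) for the polynomials T_{k,β} over ℤ[r^{±1}] has a unique solution. -/

import Mathlib

/-- The fundamental root `α_i`, written in coordinates with respect to the basis of
fundamental roots. -/
def esingle {n : ℕ} (i : Fin n) : Fin n → ℤ := Pi.single i 1

/-- A finite crystallographic simply-laced root system (type `A`, `D` or `E`),
given by the Gram matrix `C` of the fundamental roots `α_1, …, α_n` (all of squared
length 2):  `C i j = (α_i, α_j)`, which is `2` on the diagonal and `0` or `-1` off
the diagonal, and is positive definite.  Roots are coordinatized in the root
lattice `ℤⁿ`; the inner product is `ip`, and the positive roots are exactly the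
lattice vectors of squared length `2` with nonnegative coordinates. -/
structure ADE (n : ℕ) where
  C : Matrix (Fin n) (Fin n) ℤ
  symm : ∀ i j, C i j = C j i
  diag : ∀ i, C i i = 2
  offdiag : ∀ i j, i ≠ j → C i j = 0 ∨ C i j = -1
  posdef : ∀ v : Fin n → ℤ, v ≠ 0 → 0 < ∑ i, ∑ j, v i * C i j * v j

namespace ADE

variable {n : ℕ}

/-- The inner product `( , )` on the root lattice. -/
def ip (X : ADE n) (v w : Fin n → ℤ) : ℤ := ∑ i, ∑ j, v i * X.C i j * w j

/-- The set `Φ⁺` of positive roots: the lattice vectors of squared length `2`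
all of whose coordinates (with respect to the fundamental roots) are nonnegative. -/
def Pos (X : ADE n) : Set (Fin n → ℤ) :=
  {β | β ≠ 0 ∧ (∀ j, 0 ≤ β j) ∧ X.ip β β = 2}

/-- The height `ht(β)`: the sum of the coefficients of `β` with respect to the
fundamental roots. -/
def htZ (β : Fin n → ℤ) : ℤ := ∑ j, β j

end ADE

namespace ADE

variable {n : ℕ}

/-- The index type of the basis `{x_β : β ∈ Φ⁺}`. -/
abbrev PosIdx' (X : ADE n) := {β : Fin n → ℤ // β ∈ X.Pos}

/-- The Lawrence–Krammer equations of Table 1 of Cohen–Wales for the coefficients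
`T_{k,β}` (`β ∈ Φ⁺`), over a coefficient ring `A` with distinguished invertible
element `r` (with inverse `rinv`):
* `T_{k,α_l} = 0` for `k ≠ l`;
* `T_{k,α_k} = r⁴`;
* `T_{k,α_k+α_l} = r⁵ - r³` for adjacent `k, l`;
* `T_{k,β} = r T_{k,β-α_l}` if `(α_l,β) = 1` and `(α_k,α_l) = 0`;
* `T_{k,β} = T_{l,β-α_k-α_l} + (r - r⁻¹) T_{k,β-α_l}` if `(α_k,β) = 0`,
  `(α_l,β) = 1`, `(α_k,α_l) = -1`;
* `T_{k,β} = r⁻¹ T_{l,β-α_l} + (r - r⁻¹) T_{k,β-α_l}` if `(α_k,β) = -1`,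
  `(α_l,β) = 1`, `(α_k,α_l) = -1`;
* `T_{k,β} = r T_{l,β-α_k}` if `(α_k,β) = 1`, `(α_l,β) = 0`, `(α_k,α_l) = -1`. -/
def TableRels (X : ADE n) (A : Type) [CommRing A] (r rinv : A)
    (T : Fin n → ADE.PosIdx' X → A) : Prop :=
  (∀ (k l : Fin n), k ≠ l → ∀ b : ADE.PosIdx' X, b.1 = esingle l → T k b = 0) ∧
  (∀ (k : Fin n) (b : ADE.PosIdx' X), b.1 = esingle k → T k b = r ^ 4) ∧
  (∀ (k l : Fin n) (b : ADE.PosIdx' X), X.ip (esingle k) (esingle l) = -1 →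
      b.1 = esingle k + esingle l → T k b = r ^ 5 - r ^ 3) ∧
  (∀ (k l : Fin n) (b c : ADE.PosIdx' X), X.ip (esingle l) b.1 = 1 →
      X.ip (esingle k) (esingle l) = 0 → b.1 = c.1 + esingle l →
      T k b = r * T k c) ∧
  (∀ (k l : Fin n) (b c d : ADE.PosIdx' X), X.ip (esingle k) b.1 = 0 →
      X.ip (esingle l) b.1 = 1 → X.ip (esingle k) (esingle l) = -1 →
      b.1 = c.1 + esingle k + esingle l → b.1 = d.1 + esingle l →
      T k b = T l c + (r - rinv) * T k d) ∧
  (∀ (k l : Fin n) (b c d : ADE.PosIdx' X), X.ip (esingle k) b.1 = -1 →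
      X.ip (esingle l) b.1 = 1 → X.ip (esingle k) (esingle l) = -1 →
      b.1 = c.1 + esingle l → b.1 = d.1 + esingle l →
      T k b = rinv * T l c + (r - rinv) * T k d) ∧
  (∀ (k l : Fin n) (b c : ADE.PosIdx' X), X.ip (esingle k) b.1 = 1 →
      X.ip (esingle l) b.1 = 0 → X.ip (esingle k) (esingle l) = -1 →
      b.1 = c.1 + esingle k → T k b = r * T l c)

end ADE

/-!
Order the unknowns `T_{k,β}` by the height of `β`. Every unknown is the left-hand side of at
least one equation of Table 1, and the right-hand sides only involve roots of smaller height: a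
positive root `β` that is not simple has a simple root `α_l` with `(α_l, β) = 1`, and then
`β - α_l` is again a positive root. Existence and uniqueness therefore follow by well-founded
recursion on the height, once any two equations with the same left-hand side are shown to agree
whenever all equations of smaller height hold. For this, both right-hand sides are expanded one
more step, down to `β - α_l - α_l'` (and `- α_k`); the two simple roots `α_l, α_l'` involved are
orthogonal unless `β` is one of a few roots of height at most three, of an explicitly known
shape, for which both sides are computed directly.
-/

/-- `R T i v` says that `v` is the right-hand side, evaluated at `T`, of one of the equations for
the unknown `i`; the right-hand sides only involve unknowns of smaller height `ht`. -/
theorem existsUnique_of_rules {ι A : Type*} [Nonempty A] (ht : ι → ℕ)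
    (R : (ι → A) → ι → A → Prop)
    (hcongr : ∀ T T' i v, (∀ j, ht j < ht i → T j = T' j) → R T i v → R T' i v)
    (hexists : ∀ T i, ∃ v, R T i v)
    (hunique : ∀ T i v v', (∀ j, ht j < ht i → ∀ w, R T j w → T j = w) →
      R T i v → R T i v' → v = v') :
    ∃! T : ι → A, ∀ i v, R T i v → T i = v := by
  let T : ι → A := (measure ht).wf.fix fun i rec =>
    (hexists (fun j => if h : ht j < ht i then rec j h else Classical.arbitrary A) i).choose
  let below (i : ι) : ι → A := fun j => if ht j < ht i then T j else Classical.arbitrary A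
  have below_eq {i j : ι} (h : ht j < ht i) : below i j = T j := if_pos h
  have hT (i : ι) : R (below i) i (T i) := by
    rw [show T i = _ from (measure ht).wf.fix_eq _ i]
    simpa only [dite_eq_ite] using (hexists _ i).choose_spec
  have solves (i : ι) : ∀ v, R T i v → T i = v := by
    induction i using (measure ht).wf.induction with | _ i ih => ?_
    intro v hv
    refine hunique _ i _ _ (fun j hj w hw => ?_) (hT i)
      (hcongr _ _ i v (fun j hj => (below_eq hj).symm) hv)
    rw [below_eq hj]
    exact ih j hj w (hcongr _ _ j w (fun j' hj' => below_eq (hj'.trans hj)) hw)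
  refine ⟨T, solves, fun T' hT' => funext fun i => ?_⟩
  induction i using (measure ht).wf.induction with | _ i ih => ?_
  obtain ⟨v, hv⟩ := hexists T i
  rw [hT' i v (hcongr _ _ i v (fun j hj => (ih j hj).symm) hv), solves i v hv]

namespace ADE

section RootLattice

variable {n : ℕ} {X : ADE n}

lemma esingle_injective : Function.Injective (esingle : Fin n → Fin n → ℤ) := by
  intro i j h
  by_contra hij
  simpa [esingle, hij] using congrFun h i

lemma ip_add_left (u v w : Fin n → ℤ) : X.ip (u + v) w = X.ip u w + X.ip v w := by
  simp [ip, add_mul, Finset.sum_add_distrib]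

lemma ip_add_right (u v w : Fin n → ℤ) : X.ip u (v + w) = X.ip u v + X.ip u w := by
  simp [ip, mul_add, Finset.sum_add_distrib]

lemma ip_sub_left (u v w : Fin n → ℤ) : X.ip (u - v) w = X.ip u w - X.ip v w := by
  simp [ip, sub_mul, Finset.sum_sub_distrib]

lemma ip_sub_right (u v w : Fin n → ℤ) : X.ip u (v - w) = X.ip u v - X.ip u w := by
  simp [ip, mul_sub, Finset.sum_sub_distrib]

lemma ip_comm (v w : Fin n → ℤ) : X.ip v w = X.ip w v := by
  rw [ip, ip, Finset.sum_comm]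
  refine Finset.sum_congr rfl fun i _ => Finset.sum_congr rfl fun j _ => ?_
  rw [X.symm]
  ring

lemma ip_esingle_left (k : Fin n) (w : Fin n → ℤ) :
    X.ip (esingle k) w = ∑ j, X.C k j * w j := by
  simp [ip, esingle, Pi.single_apply]

@[simp]
lemma ip_esingle_esingle (k l : Fin n) : X.ip (esingle k) (esingle l) = X.C k l := by
  rw [ip_esingle_left]
  simp [esingle, Pi.single_apply]

lemma ip_eq_sum_mul_ip_esingle (v w : Fin n → ℤ) :
    X.ip v w = ∑ i, v i * X.ip (esingle i) w := by
  refine Finset.sum_congr rfl fun i _ => ?_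
  rw [ip_esingle_left, Finset.mul_sum]
  simp only [mul_assoc]

lemma C_ne_one (i j : Fin n) : X.C i j ≠ 1 := by
  rcases eq_or_ne i j with rfl | h
  · simp [X.diag]
  · rcases X.offdiag i j h with h | h <;> simp [h]

lemma ne_of_C_eq_zero {k l : Fin n} (h : X.C k l = 0) : k ≠ l := by
  rintro rfl
  simp [X.diag] at h

lemma ne_of_C_eq_neg_one {k l : Fin n} (h : X.C k l = -1) : k ≠ l := by
  rintro rfl
  simp [X.diag] at h

lemma ip_self_nonneg (v : Fin n → ℤ) : 0 ≤ X.ip v v := by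
  rcases eq_or_ne v 0 with rfl | hv
  · simp [ip]
  · exact (X.posdef v hv).le

lemma eq_zero_of_ip_self_eq_zero {v : Fin n → ℤ} (h : X.ip v v = 0) : v = 0 := by
  by_contra hv
  have := X.posdef v hv
  rw [ip] at h
  omega

@[simp]
lemma htZ_add (v w : Fin n → ℤ) : htZ (v + w) = htZ v + htZ w := by
  simp [htZ, Finset.sum_add_distrib]

@[simp]
lemma htZ_sub (v w : Fin n → ℤ) : htZ (v - w) = htZ v - htZ w := by
  simp [htZ, Finset.sum_sub_distrib]

@[simp]
lemma htZ_esingle (l : Fin n) : htZ (esingle l) = 1 := by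
  simp [htZ, esingle]

lemma htZ_pos {β : Fin n → ℤ} (hβ : β ∈ X.Pos) : 0 < htZ β := by
  obtain ⟨hne, hnn, -⟩ := hβ
  obtain ⟨j, hj⟩ := Function.ne_iff.1 hne
  exact lt_of_lt_of_le (lt_of_le_of_ne (hnn j) (Ne.symm hj))
    (Finset.single_le_sum (fun i _ => hnn i) (Finset.mem_univ j))

lemma ip_esingle_le_two_mul {β : Fin n → ℤ} (hβ : ∀ j, 0 ≤ β j) (k : Fin n) :
    X.ip (esingle k) β ≤ 2 * β k := by
  rw [ip_esingle_left, ← Finset.add_sum_erase _ _ (Finset.mem_univ k), X.diag]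
  have : ∑ j ∈ Finset.univ.erase k, X.C k j * β j ≤ 0 := Finset.sum_nonpos fun j hj => by
    rcases X.offdiag k j (Finset.ne_of_mem_erase hj).symm with h | h <;> rw [h] <;>
      linarith [hβ j]
  linarith

lemma ip_sub_esingle_self (β : Fin n → ℤ) (k : Fin n) :
    X.ip (β - esingle k) (β - esingle k) = X.ip β β - 2 * X.ip (esingle k) β + 2 := by
  rw [ip_sub_left, ip_sub_right, ip_sub_right, ip_comm β (esingle k), ip_esingle_esingle, X.diag]
  ring

lemma ip_add_esingle_self (β : Fin n → ℤ) (k : Fin n) :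
    X.ip (β + esingle k) (β + esingle k) = X.ip β β + 2 * X.ip (esingle k) β + 2 := by
  rw [ip_add_left, ip_add_right, ip_add_right, ip_comm β (esingle k), ip_esingle_esingle, X.diag]
  ring

lemma ip_esingle_le_two {β : Fin n → ℤ} (hβ : β ∈ X.Pos) (k : Fin n) :
    X.ip (esingle k) β ≤ 2 := by
  have := ip_self_nonneg (X := X) (β - esingle k)
  rw [ip_sub_esingle_self, hβ.2.2] at this
  omega

lemma neg_one_le_ip_esingle {β : Fin n → ℤ} (hβ : β ∈ X.Pos) (k : Fin n) :
    -1 ≤ X.ip (esingle k) β := by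
  have hsq := ip_add_esingle_self (X := X) β k
  rw [hβ.2.2] at hsq
  by_contra! h
  have h0 : β + esingle k = 0 :=
    eq_zero_of_ip_self_eq_zero (by linarith [ip_self_nonneg (X := X) (β + esingle k)])
  have := congrFun h0 k
  simp only [Pi.add_apply, esingle, Pi.single_eq_same, Pi.zero_apply] at this
  linarith [hβ.2.1 k]

lemma eq_esingle_of_ip_eq_two {β : Fin n → ℤ} (hβ : β ∈ X.Pos) {k : Fin n}
    (h : X.ip (esingle k) β = 2) : β = esingle k := by
  refine sub_eq_zero.1 (eq_zero_of_ip_self_eq_zero (X := X) ?_)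
  rw [ip_sub_esingle_self, hβ.2.2, h]
  norm_num

lemma sub_esingle_mem {β : Fin n → ℤ} (hβ : β ∈ X.Pos) {l : Fin n}
    (h : X.ip (esingle l) β = 1) : β - esingle l ∈ X.Pos := by
  have hl : 1 ≤ β l := by linarith [ip_esingle_le_two_mul (X := X) hβ.2.1 l]
  have hsq : X.ip (β - esingle l) (β - esingle l) = 2 := by
    rw [ip_sub_esingle_self, hβ.2.2, h]
    norm_num
  refine ⟨fun h0 => by rw [h0] at hsq; simp [ip] at hsq, fun j => ?_, hsq⟩
  rcases eq_or_ne j l with rfl | hj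
  · simpa [esingle] using hl
  · simpa [esingle, hj] using hβ.2.1 j

lemma exists_ip_esingle_eq_one {β : Fin n → ℤ} (hβ : β ∈ X.Pos)
    (hs : ∀ m, β ≠ esingle m) : ∃ l, X.ip (esingle l) β = 1 := by
  by_contra! h
  have hle (i : Fin n) : X.ip (esingle i) β ≤ 0 := by
    have h2 : X.ip (esingle i) β ≠ 2 := fun h2 => hs i (eq_esingle_of_ip_eq_two hβ h2)
    have := ip_esingle_le_two hβ i
    have := h i
    omega
  have : X.ip β β ≤ 0 := by
    rw [ip_eq_sum_mul_ip_esingle]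
    exact Finset.sum_nonpos fun i _ => mul_nonpos_of_nonneg_of_nonpos (hβ.2.1 i) (hle i)
  linarith [hβ.2.2]

lemma sub_esingle_sub_esingle_mem {β : Fin n → ℤ} {k l : Fin n} (hβ : β ∈ X.Pos)
    (hk : X.ip (esingle k) β = 0) (hl : X.ip (esingle l) β = 1) (hkl : X.C k l = -1) :
    β - esingle k - esingle l ∈ X.Pos := by
  rw [sub_right_comm]
  exact sub_esingle_mem (sub_esingle_mem hβ hl) (by simp [ip_sub_right, hk, hkl])

end RootLattice

section Rules

variable {n : ℕ} (X : ADE n) {A : Type} [CommRing A] (r rinv : A)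

/-- `Rule X r rinv F k β v`: `v` is the right-hand side, evaluated at `F`, of an equation of
Table 1 with left-hand side `T_{k,β}`. As `F` lives on the whole root lattice, the roots
`β - α_l`, `β - α_k - α_l` need no positivity proof; for `β ∈ Φ⁺` they are positive roots
anyway (`sub_esingle_mem`). -/
inductive Rule (F : Fin n → (Fin n → ℤ) → A) : Fin n → (Fin n → ℤ) → A → Prop
  | offSimple {k l β} : k ≠ l → β = esingle l → Rule F k β 0
  | simple {k β} : β = esingle k → Rule F k β (r ^ 4)
  | adjacentSum {k l β} : X.C k l = -1 → β = esingle k + esingle l → Rule F k β (r ^ 5 - r ^ 3)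
  | orthogonal {k l β} : X.ip (esingle l) β = 1 → X.C k l = 0 →
      Rule F k β (r * F k (β - esingle l))
  | ipZero {k l β} : X.ip (esingle k) β = 0 → X.ip (esingle l) β = 1 → X.C k l = -1 →
      Rule F k β (F l (β - esingle k - esingle l) + (r - rinv) * F k (β - esingle l))
  | ipNegOne {k l β} : X.ip (esingle k) β = -1 → X.ip (esingle l) β = 1 → X.C k l = -1 →
      Rule F k β (rinv * F l (β - esingle l) + (r - rinv) * F k (β - esingle l))
  | ipOne {k l β} : X.ip (esingle k) β = 1 → X.ip (esingle l) β = 0 → X.C k l = -1 →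
      Rule F k β (r * F l (β - esingle k))

def RulesAt (F : Fin n → (Fin n → ℤ) → A) (β : Fin n → ℤ) : Prop :=
  ∀ ⦃k w⦄, Rule X r rinv F k β w → F k β = w

def RulesBelow (F : Fin n → (Fin n → ℤ) → A) (β : Fin n → ℤ) : Prop :=
  ∀ γ ∈ X.Pos, htZ γ < htZ β → RulesAt X r rinv F γ

variable {X r rinv} {F : Fin n → (Fin n → ℤ) → A} {k l l' : Fin n} {β : Fin n → ℤ} {v v' : A}

lemma RulesBelow.at_sub (IH : RulesBelow X r rinv F β) (h : β - esingle l ∈ X.Pos) :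
    RulesAt X r rinv F (β - esingle l) :=
  IH _ h (by simp)

lemma RulesBelow.sub (IH : RulesBelow X r rinv F β) : RulesBelow X r rinv F (β - esingle l) :=
  fun γ hγ hlt => IH γ hγ (by simp at hlt; omega)

lemma Rule.congr {F' : Fin n → (Fin n → ℤ) → A}
    (hF : ∀ k' γ, htZ γ < htZ β → F k' γ = F' k' γ) (h : Rule X r rinv F k β v) :
    Rule X r rinv F' k β v := by
  have h1 (k' l) : F k' (β - esingle l) = F' k' (β - esingle l) := hF _ _ (by simp)
  have h2 (k' l l') : F k' (β - esingle l - esingle l') = F' k' (β - esingle l - esingle l') :=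
    hF _ _ (by simp)
  cases h with
  | offSimple hkl hβ => exact .offSimple hkl hβ
  | simple hβ => exact .simple hβ
  | adjacentSum hkl hβ => exact .adjacentSum hkl hβ
  | orthogonal hl hkl => rw [h1]; exact .orthogonal hl hkl
  | ipZero hk hl hkl => rw [h1, h2]; exact .ipZero hk hl hkl
  | ipNegOne hk hl hkl => rw [h1, h1]; exact .ipNegOne hk hl hkl
  | ipOne hk hl hkl => rw [h1]; exact .ipOne hk hl hkl

lemma Rule.exists_of_ip_eq_one (F) (hβ : β ∈ X.Pos) (hk : X.ip (esingle k) β = 1) :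
    ∃ v, Rule X r rinv F k β v := by
  by_cases hγ : ∃ m, β - esingle k = esingle m
  · obtain ⟨m, hm⟩ := hγ
    have hβm : β = esingle k + esingle m := by rw [← hm]; abel
    have hkm : X.C k m = -1 := by
      rw [hβm, ip_add_right, ip_esingle_esingle, ip_esingle_esingle, X.diag] at hk
      omega
    exact ⟨_, .adjacentSum hkm hβm⟩
  push Not at hγ
  obtain ⟨m, hm⟩ := exists_ip_esingle_eq_one (sub_esingle_mem hβ hk) hγ
  rw [ip_sub_right, ip_esingle_esingle, X.symm] at hm
  have hmk : m ≠ k := by rintro rfl; rw [hk, X.diag] at hm; omega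
  rcases X.offdiag k m hmk.symm with hkm | hkm
  · exact ⟨_, .orthogonal (by omega) hkm⟩
  · exact ⟨_, .ipOne hk (by omega) hkm⟩

lemma Rule.exists (F) (hβ : β ∈ X.Pos) (k : Fin n) : ∃ v, Rule X r rinv F k β v := by
  by_cases hs : ∃ m, β = esingle m
  · obtain ⟨m, rfl⟩ := hs
    rcases eq_or_ne k m with rfl | hkm
    · exact ⟨_, .simple rfl⟩
    · exact ⟨_, .offSimple hkm rfl⟩
  push Not at hs
  rcases eq_or_ne (X.ip (esingle k) β) 1 with hk | hk
  · exact exists_of_ip_eq_one F hβ hk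
  obtain ⟨l, hl⟩ := exists_ip_esingle_eq_one hβ hs
  have hlk : l ≠ k := by rintro rfl; exact hk hl
  rcases X.offdiag k l hlk.symm with hkl | hkl
  · exact ⟨_, .orthogonal hl hkl⟩
  have hk2 : X.ip (esingle k) β ≠ 2 := fun h => hs k (eq_esingle_of_ip_eq_two hβ h)
  have := ip_esingle_le_two hβ k
  have := neg_one_le_ip_esingle hβ k
  rcases (by omega : X.ip (esingle k) β = 0 ∨ X.ip (esingle k) β = -1) with hk0 | hk1
  · exact ⟨_, .ipZero hk0 hl hkl⟩
  · exact ⟨_, .ipNegOne hk1 hl hkl⟩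

lemma RulesBelow.orthogonal_eq_orthogonal (hβ : β ∈ X.Pos) (IH : RulesBelow X r rinv F β)
    (hl : X.ip (esingle l) β = 1) (hkl : X.C k l = 0)
    (hl' : X.ip (esingle l') β = 1) (hkl' : X.C k l' = 0) :
    r * F k (β - esingle l) = r * F k (β - esingle l') := by
  rcases eq_or_ne l l' with rfl | hll'
  · rfl
  have hγ := sub_esingle_mem hβ hl
  have hγ' := sub_esingle_mem hβ hl'
  rcases X.offdiag l l' hll' with h0 | h1
  · rw [IH.at_sub hγ (.orthogonal (l := l') (by simp [ip_sub_right, hl', X.symm l' l, h0]) hkl'),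
      IH.at_sub hγ' (.orthogonal (l := l) (by simp [ip_sub_right, hl, h0]) hkl), sub_right_comm]
  · have e : β - esingle l = esingle l' :=
      eq_esingle_of_ip_eq_two (k := l') hγ (by simp [ip_sub_right, hl', X.symm l' l, h1])
    have e' : β - esingle l' = esingle l := by rw [← e]; abel
    rw [IH.at_sub hγ (.offSimple (ne_of_C_eq_zero hkl') e),
      IH.at_sub hγ' (.offSimple (ne_of_C_eq_zero hkl) e')]

lemma RulesBelow.orthogonal_eq_ipZero (hβ : β ∈ X.Pos) (IH : RulesBelow X r rinv F β)
    (hl : X.ip (esingle l) β = 1) (hkl : X.C k l = 0) (hk : X.ip (esingle k) β = 0)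
    (hl' : X.ip (esingle l') β = 1) (hkl' : X.C k l' = -1) :
    r * F k (β - esingle l) =
      F l' (β - esingle k - esingle l') + (r - rinv) * F k (β - esingle l') := by
  have hll' : l ≠ l' := by rintro rfl; omega
  have hγ := sub_esingle_mem hβ hl
  rcases X.offdiag l l' hll' with h0 | h1
  swap
  · have e := eq_esingle_of_ip_eq_two (k := l') hγ (by simp [ip_sub_right, hl', X.symm l' l, h1])
    have := congrArg (X.ip (esingle k)) e
    simp [ip_sub_right, hk, hkl, hkl'] at this
  rw [IH.at_sub hγ (.ipZero (l := l') (by simp [ip_sub_right, hk, hkl])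
      (by simp [ip_sub_right, hl', X.symm l' l, h0]) hkl'),
    IH.sub.at_sub (sub_esingle_sub_esingle_mem hβ hk hl' hkl') (.orthogonal (l := l)
      (by simp [ip_sub_right, hl, X.symm l k, hkl, h0]) (by rw [X.symm, h0])),
    IH.at_sub (sub_esingle_mem hβ hl') (.orthogonal (l := l)
      (by simp [ip_sub_right, hl, h0]) hkl)]
  ring_nf

lemma RulesBelow.orthogonal_eq_ipNegOne (hβ : β ∈ X.Pos) (IH : RulesBelow X r rinv F β)
    (hl : X.ip (esingle l) β = 1) (hkl : X.C k l = 0) (hk : X.ip (esingle k) β = -1)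
    (hl' : X.ip (esingle l') β = 1) (hkl' : X.C k l' = -1) :
    r * F k (β - esingle l) =
      rinv * F l' (β - esingle l') + (r - rinv) * F k (β - esingle l') := by
  have hll' : l ≠ l' := by rintro rfl; omega
  have hγ := sub_esingle_mem hβ hl
  have hγ' := sub_esingle_mem hβ hl'
  rcases X.offdiag l l' hll' with h0 | h1
  · rw [IH.at_sub hγ (.ipNegOne (l := l') (by simp [ip_sub_right, hk, hkl])
        (by simp [ip_sub_right, hl', X.symm l' l, h0]) hkl'),
      IH.at_sub hγ' (.orthogonal (k := l') (l := l) (by simp [ip_sub_right, hl, h0])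
        (by rw [X.symm, h0])),
      IH.at_sub hγ' (.orthogonal (l := l) (by simp [ip_sub_right, hl, h0]) hkl)]
    ring_nf
  · have e : β - esingle l = esingle l' :=
      eq_esingle_of_ip_eq_two hγ (by simp [ip_sub_right, hl', X.symm l' l, h1])
    have e' : β - esingle l' = esingle l := by rw [← e]; abel
    rw [IH.at_sub hγ (.offSimple (ne_of_C_eq_neg_one hkl') e),
      IH.at_sub hγ' (.offSimple hll'.symm e'), IH.at_sub hγ' (.offSimple (ne_of_C_eq_zero hkl) e')]
    ring

lemma RulesBelow.orthogonal_eq_ipOne (hβ : β ∈ X.Pos) (IH : RulesBelow X r rinv F β)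
    (hl : X.ip (esingle l) β = 1) (hkl : X.C k l = 0) (hk : X.ip (esingle k) β = 1)
    (hl' : X.ip (esingle l') β = 0) (hkl' : X.C k l' = -1) :
    r * F k (β - esingle l) = r * F l' (β - esingle k) := by
  have hll' : l ≠ l' := by rintro rfl; omega
  have hγ := sub_esingle_mem hβ hl
  have hγk := sub_esingle_mem hβ hk
  rcases X.offdiag l l' hll' with h0 | h1
  · rw [IH.at_sub hγ (.ipOne (l := l') (by simp [ip_sub_right, hk, hkl])
        (by simp [ip_sub_right, hl', X.symm l' l, h0]) hkl'),
      IH.at_sub hγk (.orthogonal (l := l) (by simp [ip_sub_right, hl, X.symm l k, hkl])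
        (by rw [X.symm, h0]))]
    ring_nf
  · have hδ := sub_esingle_mem hγk (l := l') (by simp [ip_sub_right, hl', X.symm l' k, hkl'])
    have e : β - esingle k - esingle l' = esingle l :=
      eq_esingle_of_ip_eq_two hδ (by simp [ip_sub_right, hl, X.symm l k, hkl, h1])
    rw [IH.at_sub hγ (.adjacentSum hkl' (by rw [← e]; abel)),
      IH.at_sub hγk (.adjacentSum (by rw [X.symm, h1]) (by rw [← e]; abel))]

lemma RulesBelow.ipZero_eq_ipZero (hβ : β ∈ X.Pos) (IH : RulesBelow X r rinv F β)
    (hk : X.ip (esingle k) β = 0) (hl : X.ip (esingle l) β = 1) (hkl : X.C k l = -1)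
    (hl' : X.ip (esingle l') β = 1) (hkl' : X.C k l' = -1) :
    F l (β - esingle k - esingle l) + (r - rinv) * F k (β - esingle l) =
      F l' (β - esingle k - esingle l') + (r - rinv) * F k (β - esingle l') := by
  rcases eq_or_ne l l' with rfl | hll'
  · rfl
  have hγ := sub_esingle_mem hβ hl
  have hγ' := sub_esingle_mem hβ hl'
  have h0 : X.C l l' = 0 := (X.offdiag l l' hll').resolve_right fun h1 => by
    have e := eq_esingle_of_ip_eq_two (k := l') hγ (by simp [ip_sub_right, hl', X.symm l' l, h1])
    have := congrArg (X.ip (esingle k)) e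
    simp [ip_sub_right, hk, hkl, hkl'] at this
  have e : β - esingle l - esingle l' = esingle k := eq_esingle_of_ip_eq_two
    (sub_esingle_mem hγ (by simp [ip_sub_right, hl', X.symm l' l, h0]))
    (by simp [ip_sub_right, hk, hkl, hkl'])
  rw [IH.sub.at_sub (sub_esingle_sub_esingle_mem hβ hk hl hkl)
      (.offSimple hll' (by rw [← e]; abel)),
    IH.sub.at_sub (sub_esingle_sub_esingle_mem hβ hk hl' hkl')
      (.offSimple hll'.symm (by rw [← e]; abel)),
    IH.at_sub hγ (.adjacentSum hkl' (by rw [← e]; abel)),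
    IH.at_sub hγ' (.adjacentSum hkl (by rw [← e]; abel))]

/-- The right-hand side of `Rule.ipNegOne`, expanded into a form symmetric in `l` and `l'`. -/
lemma RulesBelow.ipNegOne_eq (hβ : β ∈ X.Pos) (IH : RulesBelow X r rinv F β) (hr : r * rinv = 1)
    (hk : X.ip (esingle k) β = -1) (hl : X.ip (esingle l) β = 1) (hkl : X.C k l = -1)
    (hl' : X.ip (esingle l') β = 1) (hkl' : X.C k l' = -1) (hll' : X.C l l' = 0) :
    rinv * F l (β - esingle l) + (r - rinv) * F k (β - esingle l) =
      rinv * F k (β - esingle l - esingle l' - esingle k) +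
        (r - rinv) * (F l (β - esingle l - esingle l' - esingle k) +
          F l' (β - esingle l - esingle l' - esingle k)) +
        (r - rinv) ^ 2 * F k (β - esingle l - esingle l') := by
  have hγ := sub_esingle_mem hβ hl
  have hl'γ : X.ip (esingle l') (β - esingle l) = 1 := by
    simp [ip_sub_right, hl', X.symm l' l, hll']
  have hω := sub_esingle_mem hγ hl'γ
  rw [IH.at_sub hγ (.orthogonal (k := l) hl'γ hll'),
    IH.sub.at_sub hω (.ipNegOne (l := k) (by simp [ip_sub_right, hl, X.diag, hll'])
      (by simp [ip_sub_right, hk, hkl, hkl']) (by rw [X.symm, hkl])),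
    IH.at_sub hγ (.ipZero (l := l') (by simp [ip_sub_right, hk, hkl]) hl'γ hkl'),
    sub_right_comm (β - esingle l) (esingle k)]
  linear_combination (rinv * F k (β - esingle l - esingle l' - esingle k) +
    (r - rinv) * F l (β - esingle l - esingle l' - esingle k)) * hr

lemma RulesBelow.ipNegOne_eq_ipNegOne (hβ : β ∈ X.Pos) (IH : RulesBelow X r rinv F β)
    (hr : r * rinv = 1) (hk : X.ip (esingle k) β = -1)
    (hl : X.ip (esingle l) β = 1) (hkl : X.C k l = -1)
    (hl' : X.ip (esingle l') β = 1) (hkl' : X.C k l' = -1) :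
    rinv * F l (β - esingle l) + (r - rinv) * F k (β - esingle l) =
      rinv * F l' (β - esingle l') + (r - rinv) * F k (β - esingle l') := by
  rcases eq_or_ne l l' with rfl | hll'
  · rfl
  have h0 : X.C l l' = 0 := (X.offdiag l l' hll').resolve_right fun h1 => by
    have e := eq_esingle_of_ip_eq_two (k := l') (sub_esingle_mem hβ hl)
      (by simp [ip_sub_right, hl', X.symm l' l, h1])
    have := congrArg (X.ip (esingle k)) e
    simp [ip_sub_right, hk, hkl, hkl'] at this
  rw [IH.ipNegOne_eq hβ hr hk hl hkl hl' hkl' h0,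
    IH.ipNegOne_eq hβ hr hk hl' hkl' hl hkl (by rw [X.symm, h0])]
  ring_nf

lemma RulesBelow.ipOne_eq_ipOne (hβ : β ∈ X.Pos) (IH : RulesBelow X r rinv F β)
    (hk : X.ip (esingle k) β = 1) (hl : X.ip (esingle l) β = 0) (hkl : X.C k l = -1)
    (hl' : X.ip (esingle l') β = 0) (hkl' : X.C k l' = -1) :
    r * F l (β - esingle k) = r * F l' (β - esingle k) := by
  rcases eq_or_ne l l' with rfl | hll'
  · rfl
  have hγ := sub_esingle_mem hβ hk
  have hlγ : X.ip (esingle l) (β - esingle k) = 1 := by simp [ip_sub_right, hl, X.symm l k, hkl]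
  have hl'γ : X.ip (esingle l') (β - esingle k) = 1 := by
    simp [ip_sub_right, hl', X.symm l' k, hkl']
  have h0 : X.C l l' = 0 := (X.offdiag l l' hll').resolve_right fun h1 => by
    have e := eq_esingle_of_ip_eq_two (k := l') (sub_esingle_mem hγ hlγ)
      (by simp [ip_sub_right, hl', X.symm l' k, hkl', X.symm l' l, h1])
    have := congrArg (X.ip (esingle k)) e
    simp [ip_sub_right, hk, hkl, hkl', X.diag] at this
  rw [IH.at_sub hγ (.orthogonal (k := l) hl'γ h0),
    IH.at_sub hγ (.orthogonal (k := l') hlγ (by rw [X.symm, h0])),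
    IH.sub.at_sub (sub_esingle_mem hγ hl'γ) (.ipOne (l := k)
      (by simp [ip_sub_right, hl, X.symm l k, hkl, h0]) (by simp [ip_sub_right, hk, X.diag, hkl'])
      (by rw [X.symm, hkl])),
    IH.sub.at_sub (sub_esingle_mem hγ hlγ) (.ipOne (l := k)
      (by simp [ip_sub_right, hl', X.symm l' k, hkl', X.symm l' l, h0])
      (by simp [ip_sub_right, hk, X.diag, hkl]) (by rw [X.symm, hkl']))]
  ring_nf

lemma Rule.eq_of_eq_esingle {m : Fin n} (h : Rule X r rinv F k (esingle m) v) :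
    v = if k = m then r ^ 4 else 0 := by
  cases h with
  | offSimple hkl hβ => obtain rfl := esingle_injective hβ; simp [hkl]
  | simple hβ => simp [esingle_injective hβ]
  | adjacentSum _ hβ => simpa using congrArg htZ hβ
  | orthogonal hl _ | ipZero _ hl _ | ipNegOne _ hl _ | ipOne hl _ _ =>
    exact absurd (by simpa using hl) (C_ne_one _ _)

lemma Rule.eq_of_eq_adjacentSum (hkl : X.C k l = -1)
    (h : Rule X r rinv F k (esingle k + esingle l) v) : v = r ^ 5 - r ^ 3 := by
  cases h with
  | offSimple _ hβ | simple hβ => simpa using congrArg htZ hβ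
  | adjacentSum => rfl
  | ipZero hk | ipNegOne hk => simp [ip_add_right, X.diag, hkl] at hk
  | @orthogonal l' _ hl' hkl' =>
    simp only [ip_add_right, ip_esingle_esingle, X.symm l' k, hkl', zero_add] at hl'
    exact absurd hl' (C_ne_one _ _)
  | @ipOne l' _ _ hl' hkl' =>
    simp only [ip_add_right, ip_esingle_esingle, X.symm l' k, hkl'] at hl'
    exact absurd (by linarith) (C_ne_one l' l)

theorem Rule.unique (hβ : β ∈ X.Pos) (IH : RulesBelow X r rinv F β) (hr : r * rinv = 1)
    (h : Rule X r rinv F k β v) (h' : Rule X r rinv F k β v') : v = v' := by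
  by_cases hs : ∃ m, β = esingle m
  · obtain ⟨m, rfl⟩ := hs
    rw [h.eq_of_eq_esingle, h'.eq_of_eq_esingle]
  by_cases ha : ∃ l, X.C k l = -1 ∧ β = esingle k + esingle l
  · obtain ⟨l, hkl, rfl⟩ := ha
    rw [h.eq_of_eq_adjacentSum hkl, h'.eq_of_eq_adjacentSum hkl]
  cases h with
  | offSimple _ hβ | simple hβ => exact (hs ⟨_, hβ⟩).elim
  | adjacentSum hkl hβ => exact (ha ⟨_, hkl, hβ⟩).elim
  | orthogonal hl hkl => cases h' with
    | offSimple _ hβ | simple hβ => exact (hs ⟨_, hβ⟩).elim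
    | adjacentSum hkl hβ => exact (ha ⟨_, hkl, hβ⟩).elim
    | orthogonal hl' hkl' => exact IH.orthogonal_eq_orthogonal hβ hl hkl hl' hkl'
    | ipZero hk hl' hkl' => exact IH.orthogonal_eq_ipZero hβ hl hkl hk hl' hkl'
    | ipNegOne hk hl' hkl' => exact IH.orthogonal_eq_ipNegOne hβ hl hkl hk hl' hkl'
    | ipOne hk hl' hkl' => exact IH.orthogonal_eq_ipOne hβ hl hkl hk hl' hkl'
  | ipZero hk hl hkl => cases h' with
    | offSimple _ hβ | simple hβ => exact (hs ⟨_, hβ⟩).elim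
    | adjacentSum hkl hβ => exact (ha ⟨_, hkl, hβ⟩).elim
    | orthogonal hl' hkl' => exact (IH.orthogonal_eq_ipZero hβ hl' hkl' hk hl hkl).symm
    | ipZero _ hl' hkl' => exact IH.ipZero_eq_ipZero hβ hk hl hkl hl' hkl'
    | ipNegOne hk' | ipOne hk' => omega
  | ipNegOne hk hl hkl => cases h' with
    | offSimple _ hβ | simple hβ => exact (hs ⟨_, hβ⟩).elim
    | adjacentSum hkl hβ => exact (ha ⟨_, hkl, hβ⟩).elim
    | orthogonal hl' hkl' => exact (IH.orthogonal_eq_ipNegOne hβ hl' hkl' hk hl hkl).symm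
    | ipNegOne _ hl' hkl' => exact IH.ipNegOne_eq_ipNegOne hβ hr hk hl hkl hl' hkl'
    | ipZero hk' | ipOne hk' => omega
  | ipOne hk hl hkl => cases h' with
    | offSimple _ hβ | simple hβ => exact (hs ⟨_, hβ⟩).elim
    | adjacentSum hkl hβ => exact (ha ⟨_, hkl, hβ⟩).elim
    | orthogonal hl' hkl' => exact (IH.orthogonal_eq_ipOne hβ hl' hkl' hk hl hkl).symm
    | ipOne _ hl' hkl' => exact IH.ipOne_eq_ipOne hβ hk hl hkl hl' hkl'
    | ipZero hk' | ipNegOne hk' => omega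

open Classical in
variable (X) in
noncomputable def extendByZero (T : Fin n → X.PosIdx' → A) (k : Fin n) (β : Fin n → ℤ) : A :=
  if h : β ∈ X.Pos then T k ⟨β, h⟩ else 0

lemma extendByZero_of_mem (T : Fin n → X.PosIdx' → A) (k : Fin n) {γ : Fin n → ℤ}
    (h : γ ∈ X.Pos) : extendByZero X T k γ = T k ⟨γ, h⟩ :=
  dif_pos h

@[simp]
lemma extendByZero_coe (T : Fin n → X.PosIdx' → A) (k : Fin n) (b : X.PosIdx') :
    extendByZero X T k b.1 = T k b :=
  extendByZero_of_mem T k b.2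

lemma extendByZero_congr {T T' : Fin n → X.PosIdx' → A} {β : Fin n → ℤ}
    (h : ∀ k (c : X.PosIdx'), htZ c.1 < htZ β → T k c = T' k c) (k : Fin n) {γ : Fin n → ℤ}
    (hγ : htZ γ < htZ β) : extendByZero X T k γ = extendByZero X T' k γ := by
  unfold extendByZero
  split_ifs with hmem
  exacts [h k ⟨γ, hmem⟩ hγ, rfl]

lemma tableRels_iff_rules (T : Fin n → X.PosIdx' → A) :
    TableRels X A r rinv T ↔
      ∀ k (b : X.PosIdx') v, Rule X r rinv (extendByZero X T) k b.1 v → T k b = v := by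
  constructor
  · rintro ⟨h1, h2, h3, h4, h5, h6, h7⟩ k b v hv
    cases hv with
    | offSimple hkl hβ => exact h1 k _ hkl b hβ
    | simple hβ => exact h2 k b hβ
    | adjacentSum hkl hβ => exact h3 k _ b (by simpa using hkl) hβ
    | orthogonal hl hkl =>
      rw [extendByZero_of_mem T k (sub_esingle_mem b.2 hl)]
      exact h4 k _ b _ hl (by simpa using hkl) (sub_add_cancel _ _).symm
    | ipZero hk hl hkl =>
      rw [extendByZero_of_mem T _ (sub_esingle_sub_esingle_mem b.2 hk hl hkl),
        extendByZero_of_mem T k (sub_esingle_mem b.2 hl)]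
      exact h5 k _ b _ _ hk hl (by simpa using hkl) (by dsimp only; abel) (sub_add_cancel _ _).symm
    | ipNegOne hk hl hkl =>
      rw [extendByZero_of_mem T _ (sub_esingle_mem b.2 hl),
        extendByZero_of_mem T k (sub_esingle_mem b.2 hl)]
      exact h6 k _ b _ _ hk hl (by simpa using hkl) (sub_add_cancel _ _).symm
        (sub_add_cancel _ _).symm
    | ipOne hk hl hkl =>
      rw [extendByZero_of_mem T _ (sub_esingle_mem b.2 hk)]
      exact h7 k _ b _ hk hl (by simpa using hkl) (sub_add_cancel _ _).symm
  · intro H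
    refine ⟨fun k l hkl b hb => H k b _ (.offSimple hkl hb), fun k b hb => H k b _ (.simple hb),
      fun k l b hkl hb => H k b _ (.adjacentSum (by simpa using hkl) hb), ?_, ?_, ?_, ?_⟩
    · intro k l b c hl hkl hb
      simpa [sub_eq_of_eq_add hb] using H k b _ (.orthogonal hl (by simpa using hkl))
    · intro k l b c d hk hl hkl hc hd
      have hc' : b.1 - esingle k - esingle l = c.1 := by rw [hc]; abel
      simpa [hc', sub_eq_of_eq_add hd] using H k b _ (.ipZero hk hl (by simpa using hkl))
    · intro k l b c d hk hl hkl hc hd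
      obtain rfl : c = d := Subtype.ext (by rw [← sub_eq_of_eq_add hc, ← sub_eq_of_eq_add hd])
      simpa [sub_eq_of_eq_add hc] using H k b _ (.ipNegOne hk hl (by simpa using hkl))
    · intro k l b c hk hl hkl hb
      simpa [sub_eq_of_eq_add hb] using H k b _ (.ipOne hk hl (by simpa using hkl))

variable (X) in
theorem existsUnique_tableRels (hr : r * rinv = 1) :
    ∃! T : Fin n → X.PosIdx' → A, TableRels X A r rinv T := by
  let ht (i : Fin n × X.PosIdx') : ℕ := (htZ i.2.1).toNat
  have ht_lt {i j : Fin n × X.PosIdx'} (h : htZ j.2.1 < htZ i.2.1) : ht j < ht i :=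
    (Int.toNat_lt_toNat (htZ_pos i.2.2)).2 h
  let R (T : Fin n × X.PosIdx' → A) (i : Fin n × X.PosIdx') (v : A) : Prop :=
    Rule X r rinv (extendByZero X (Function.curry T)) i.1 i.2.1 v
  have hR : ∃! T, ∀ i v, R T i v → T i = v := by
    refine existsUnique_of_rules ht R (fun T T' i v hTT' => ?_) (fun T i => Rule.exists _ i.2.2 i.1)
      (fun T i v v' IH => Rule.unique i.2.2 ?_ hr)
    · exact Rule.congr fun k' γ hγ =>
        extendByZero_congr (fun k c hc => hTT' (k, c) (ht_lt hc)) k' hγ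
    · intro γ hγ hlt k w hw
      rw [extendByZero_of_mem _ _ hγ]
      exact IH (k, ⟨γ, hγ⟩) (ht_lt hlt) w hw
  refine (Equiv.curry _ _ _).existsUnique_congr_right.1 ((existsUnique_congr fun T => ?_).2 hR)
  exact (tableRels_iff_rules _).trans
    ⟨fun h (i : Fin n × X.PosIdx') => h i.1 i.2, fun h k b => h (k, b)⟩

end Rules

end ADE

open LaurentPolynomial in
/-- The system of Lawrence–Krammer equations (Table 1) for the polynomials
`T_{k,β} ∈ ℤ[r^{±1}]` (`k ∈ {1,…,n}`, `β ∈ Φ⁺`) has a unique solution. -/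
theorem table_existsUnique {n : ℕ} (X : ADE n) :
    ∃! Tf : Fin n → ADE.PosIdx' X → LaurentPolynomial ℤ,
      ADE.TableRels X (LaurentPolynomial ℤ) (T 1) (T (-1)) Tf :=
  X.existsUnique_tableRels (by rw [← T_add, add_neg_cancel, T_zero])
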